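/- arXiv:1603.02933 — 9 statements merged into one kernel-verified Lean document; each statement's English description precedes it below -/
import Mathlib

section
/- In a finite projective plane of order q, every blocking set has at least q + 1 points, and a blocking set of exactly q + 1 points must consist of all points of a single line. -/
/-!
Choosing a point of `B` on every line through a point `x ∉ B` is injective, because two lines
through `x` meet only in `x`; hence `B` has at least as many points as there are lines through
`x`, namely `q + 1`. If `|B| = q + 1`, this choice is a bijection, so every line through `x ∉ B`
meets `B` exactly once. Then the line through two points of `B` cannot contain a point outside `B`,
so it lies inside `B` and, having `q + 1` points, equals `B`.
-/

open Configuration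

namespace Configuration

variable {P : Type*} (L : Type*) [Membership P L]

def IsBlockingSet (B : Set P) : Prop :=
  ∀ l : L, ∃ p ∈ B, p ∈ l

variable {L}

namespace IsBlockingSet

section Nondegenerate

variable [Nondegenerate P L] {B : Set P} {x : P}

theorem exists_injective_linesThrough (hB : IsBlockingSet L B) (hx : x ∉ B) :
    ∃ g : {m : L // x ∈ m} → B, Function.Injective g ∧ ∀ m, (g m : P) ∈ m.val := by
  choose f hfB hfl using hB
  refine ⟨fun m => ⟨f m, hfB m⟩, fun m₁ m₂ h => ?_, fun m => hfl m⟩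
  have hf₁₂ : f m₁ ∈ m₂.val := by
    simpa [show f m₁ = f m₂ from congrArg Subtype.val h] using hfl m₂
  rcases Nondegenerate.eq_or_eq (hfl m₁) m₁.2 hf₁₂ m₂.2 with hfx | hm
  · exact absurd (hfx ▸ hfB m₁) hx
  · exact Subtype.ext hm

theorem lineCount_le_ncard [Finite P] (hB : IsBlockingSet L B) (hx : x ∉ B) :
    lineCount L x ≤ B.ncard := by
  obtain ⟨g, hg, -⟩ := hB.exists_injective_linesThrough hx
  exact (Nat.card_le_card_of_injective g hg).trans_eq (Nat.card_coe_set_eq B)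

theorem eq_of_mem_of_ncard_eq_lineCount [Finite P] (hB : IsBlockingSet L B) (hx : x ∉ B)
    (hcard : B.ncard = lineCount L x) {a b : P} (ha : a ∈ B) (hb : b ∈ B) {l : L}
    (hal : a ∈ l) (hbl : b ∈ l) (hxl : x ∈ l) : a = b := by
  obtain ⟨g, hg, hgm⟩ := hB.exists_injective_linesThrough hx
  have hg_surj : Function.Surjective g :=
    ((Nat.bijective_iff_injective_and_card g).2 ⟨hg, hcard.symm⟩).2
  have hg_line : ∀ c (hc : c ∈ B), c ∈ l → g ⟨l, hxl⟩ = ⟨c, hc⟩ := by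
    intro c hc hcl
    obtain ⟨m, hm⟩ := hg_surj ⟨c, hc⟩
    have hcm : c ∈ m.val := by simpa [hm] using hgm m
    have hml : m.val = l :=
      (Nondegenerate.eq_or_eq hcm m.2 hcl hxl).resolve_left fun hcx => hx (hcx ▸ hc)
    rwa [show (⟨l, hxl⟩ : {m : L // x ∈ m}) = m from Subtype.ext hml.symm]
  simpa using (hg_line a ha hal).symm.trans (hg_line b hb hbl)

end Nondegenerate

section ProjectivePlane

variable [ProjectivePlane P L] {B : Set P}

theorem order_add_one_le_ncard [Fintype P] [Finite L] (hB : IsBlockingSet L B) :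
    ProjectivePlane.order P L + 1 ≤ B.ncard := by
  by_cases hBu : B = Set.univ
  · rw [hBu, Set.ncard_univ, Nat.card_eq_fintype_card, ProjectivePlane.card_points P L]
    omega
  · obtain ⟨x, hx⟩ := (Set.ne_univ_iff_exists_notMem B).1 hBu
    exact ProjectivePlane.lineCount_eq L x ▸ hB.lineCount_le_ncard hx

theorem exists_eq_setOf_mem_of_ncard_eq [Finite P] [Finite L] (hB : IsBlockingSet L B)
    (hcard : B.ncard = ProjectivePlane.order P L + 1) : ∃ l : L, B = {p | p ∈ l} := by
  have h_order := ProjectivePlane.one_lt_order P L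
  obtain ⟨a, b, ha, hb, hab⟩ := (Set.one_lt_ncard_iff B.toFinite).1 (by omega)
  obtain ⟨hal, hbl⟩ := HasLines.mkLine_ax (L := L) hab
  refine ⟨HasLines.mkLine hab, Eq.symm (Set.eq_of_subset_of_ncard_le (fun x hxl => ?_) ?_)⟩
  · by_contra hx
    exact hab (hB.eq_of_mem_of_ncard_eq_lineCount hx
      (by rw [hcard, ProjectivePlane.lineCount_eq]) ha hb hal hbl hxl)
  · exact hcard.trans_le (ProjectivePlane.pointCount_eq P _).ge

end ProjectivePlane

end IsBlockingSet

end Configuration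

/-- In a finite projective plane of order `q`, every blocking set has at least `q+1`
points, and a blocking set of exactly `q+1` points is the point set of a line. -/
theorem blocking_set_card {P L : Type*} [Membership P L] [ProjectivePlane P L]
    [Fintype P] [Fintype L] {q : ℕ} (hq : ProjectivePlane.order P L = q)
    (B : Set P) (hB : ∀ l : L, ∃ p ∈ B, p ∈ l) :
    q + 1 ≤ B.ncard ∧ (B.ncard = q + 1 → ∃ l : L, B = {p : P | p ∈ l}) := by
  have hB : IsBlockingSet L B := hB
  subst hq
  exact ⟨hB.order_add_one_le_ncard, hB.exists_eq_setOf_mem_of_ncard_eq⟩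
end

section
/- Let L be a set of lines in a finite projective plane of order q, and suppose the maximum number of lines of L passing through a common point is exactly c. Then the number of points covered by the union of the lines in L is at most c^2 - (|L|+1)c + |L|(q+1) + 1. -/
/-!
Fix a point `p` through which exactly `c` lines of `S` pass. These `c` lines cover at most
`1 + c q` points. Every other line of `S` misses `p`, so it meets the `c` lines through `p` in
`c` distinct points and adds at most `q + 1 - c` new points. Hence `S` covers at most
`1 + c q + (|S| - c)(q + 1 - c)` points, which is the claimed bound.
-/

open Configuration Set

lemma Set.ncard_biUnion_le_ncard_mul {ι α : Type*} {t : Set ι} (ht : t.Finite) {s : ι → Set α}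
    {k : ℕ} (hk : ∀ i ∈ t, (s i).ncard ≤ k) : (⋃ i ∈ t, s i).ncard ≤ t.ncard * k := by
  lift t to Finset ι using ht
  rw [Finset.set_biUnion_coe, ncard_coe_finset, ← smul_eq_mul]
  exact (t.set_ncard_biUnion_le s).trans (Finset.sum_le_card_nsmul _ _ _ hk)

namespace Configuration

variable {P L : Type*} [Membership P L]

lemma ncard_le_ncard_inter_biUnion [HasPoints P L] [Finite P] {p : P} {l : L} (hpl : p ∉ l)
    {T : Set L} (hT : ∀ m ∈ T, p ∈ m) :
    T.ncard ≤ ({x : P | x ∈ l} ∩ ⋃ m ∈ T, {x : P | x ∈ m}).ncard := by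
  have hmeet : ∀ m ∈ T, ∃ x : P, x ∈ m ∧ x ∈ l := fun m hm =>
    have hml : m ≠ l := by rintro rfl; exact hpl (hT m hm)
    ⟨HasPoints.mkPoint hml, HasPoints.mkPoint_ax hml⟩
  have : Nonempty P := ⟨p⟩
  choose! f hfm hfl using hmeet
  refine ncard_le_ncard_of_injOn f (fun m hm => ⟨hfl m hm, mem_biUnion hm (hfm m hm)⟩) ?_
  intro m₁ hm₁ m₂ hm₂ hf
  exact (Nondegenerate.eq_or_eq (hfm m₁ hm₁) (hT m₁ hm₁) (hf ▸ hfm m₂ hm₂) (hT m₂ hm₂)).resolve_left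
    fun h => hpl (h ▸ hfl m₁ hm₁)

namespace ProjectivePlane

variable [ProjectivePlane P L] [Finite P] [Finite L]

lemma ncard_setOf_mem_line (l : L) : {x : P | x ∈ l}.ncard = order P L + 1 :=
  pointCount_eq P l

lemma ncard_setOf_line_mem (p : P) : {l : L | p ∈ l}.ncard = order P L + 1 :=
  lineCount_eq L p

lemma ncard_biUnion_le_of_forall_mem {p : P} {T : Set L} (hT : ∀ m ∈ T, p ∈ m) :
    (⋃ m ∈ T, {x : P | x ∈ m}).ncard ≤ T.ncard * order P L + 1 := by
  have hsub : ⋃ m ∈ T, {x : P | x ∈ m} ⊆ insert p (⋃ m ∈ T, {x : P | x ∈ m} \ {p}) := by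
    intro x hx
    by_cases hxp : x = p
    · exact Or.inl hxp
    · obtain ⟨m, hm, hxm⟩ := mem_iUnion₂.mp hx
      exact Or.inr (mem_biUnion hm ⟨hxm, hxp⟩)
  calc (⋃ m ∈ T, {x : P | x ∈ m}).ncard
      ≤ (⋃ m ∈ T, {x : P | x ∈ m} \ {p}).ncard + 1 :=
        (ncard_le_ncard hsub).trans (ncard_insert_le _ _)
    _ ≤ T.ncard * order P L + 1 := by
        refine Nat.add_le_add_right (ncard_biUnion_le_ncard_mul (toFinite T) fun m hm => ?_) 1
        rw [ncard_sdiff_singleton_of_mem (show p ∈ {x : P | x ∈ m} from hT m hm),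
          ncard_setOf_mem_line]
        omega

lemma ncard_diff_biUnion_le {p : P} {l : L} (hpl : p ∉ l) {T : Set L} (hT : ∀ m ∈ T, p ∈ m) :
    ({x : P | x ∈ l} \ ⋃ m ∈ T, {x : P | x ∈ m}).ncard ≤ order P L + 1 - T.ncard := by
  have hsplit := ncard_inter_add_ncard_sdiff_eq_ncard {x : P | x ∈ l} (⋃ m ∈ T, {x : P | x ∈ m})
  have hmeet := ncard_le_ncard_inter_biUnion hpl hT
  rw [ncard_setOf_mem_line] at hsplit
  omega

lemma ncard_points_covered_le (S : Set L) (p : P) :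
    {x : P | ∃ l ∈ S, x ∈ l}.ncard ≤ {l ∈ S | p ∈ l}.ncard * order P L + 1 +
      (S \ {l ∈ S | p ∈ l}).ncard * (order P L + 1 - {l ∈ S | p ∈ l}.ncard) := by
  set T := {l ∈ S | p ∈ l}
  set A := ⋃ m ∈ T, {x : P | x ∈ m}
  have hT : ∀ m ∈ T, p ∈ m := fun m hm => hm.2
  have hcover : {x : P | ∃ l ∈ S, x ∈ l} ⊆ A ∪ ⋃ l ∈ S \ T, ({x : P | x ∈ l} \ A) := by
    rintro x ⟨l, hlS, hxl⟩
    by_cases hlT : l ∈ T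
    · exact Or.inl (mem_biUnion hlT hxl)
    · by_cases hxA : x ∈ A
      · exact Or.inl hxA
      · exact Or.inr (mem_biUnion ⟨hlS, hlT⟩ ⟨hxl, hxA⟩)
  calc {x : P | ∃ l ∈ S, x ∈ l}.ncard
      ≤ A.ncard + (⋃ l ∈ S \ T, ({x : P | x ∈ l} \ A)).ncard :=
        (ncard_le_ncard hcover).trans (ncard_union_le _ _)
    _ ≤ _ := add_le_add (ncard_biUnion_le_of_forall_mem hT)
        (ncard_biUnion_le_ncard_mul (toFinite _) fun l hl =>
          ncard_diff_biUnion_le (fun hpl => hl.2 ⟨hl.1, hpl⟩) hT)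

end ProjectivePlane

end Configuration

/-- Lemma (maxcover): if the maximum number of concurrent lines of a line set `S` is
exactly `c`, then `S` covers at most `c^2 - (|S|+1)c + |S|(q+1) + 1` points. -/
theorem maxcover {P L : Type*} [Membership P L] [ProjectivePlane P L]
    [Fintype P] [Fintype L] {q : ℕ} (hq : ProjectivePlane.order P L = q)
    (S : Set L) (c : ℕ)
    (hc : IsGreatest {n : ℕ | ∃ p : P, ({l ∈ S | p ∈ l}).ncard = n} c) :
    ({x : P | ∃ l ∈ S, x ∈ l}.ncard : ℤ) ≤
      (c : ℤ) ^ 2 - (S.ncard + 1) * c + S.ncard * (q + 1) + 1 := by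
  obtain ⟨⟨p, hp⟩, -⟩ := hc
  have hcS : c ≤ S.ncard := hp ▸ ncard_le_ncard (sep_subset S _)
  have hcq : c ≤ q + 1 := by
    rw [← hp, ← hq, ← ProjectivePlane.ncard_setOf_line_mem p]
    exact ncard_le_ncard fun l hl => hl.2
  have h := ProjectivePlane.ncard_points_covered_le S p
  rw [ncard_sdiff (sep_subset S _), hp, hq] at h
  zify [hcS, hcq] at h
  linear_combination h
end

section
/- Let D = P ∪ L be a dominating set in the incidence graph of a finite projective plane of order q, where P is a set of points and L a set of lines. Then |D| ≥ q^2 + q - (q-1)|P| and |D| ≥ q^2 + q - (q-1)|L|. In particular, if |D| < 3q - 1, then |P| ≥ q and |L| ≥ q. -/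
open Configuration

/-- `Ps ∪ Ls` is a dominating set of the incidence graph: every line is in `Ls` or
contains a point of `Ps`, and every point is in `Ps` or lies on a line of `Ls`. -/
def IsDominating {P L : Type*} [Membership P L] (Ps : Set P) (Ls : Set L) : Prop :=
  (∀ l : L, l ∈ Ls ∨ ∃ p ∈ Ps, p ∈ l) ∧ (∀ p : P, p ∈ Ps ∨ ∃ l ∈ Ls, p ∈ l)

open Finset in
lemma dominating_key {P L : Type*} [Membership P L] [ProjectivePlane P L]
    [Fintype P] [Fintype L] {q : ℕ} (hq : ProjectivePlane.order P L = q)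
    (Ps : Set P) (Ls : Set L) (h : ∀ l : L, l ∈ Ls ∨ ∃ p ∈ Ps, p ∈ l) :
    (q : ℤ) ^ 2 + q - (q - 1) * Ps.ncard ≤ (Ps.ncard : ℤ) + Ls.ncard := by
  classical
  have hcardL : Fintype.card L = q ^ 2 + q + 1 := by
    rw [ProjectivePlane.card_lines P L, hq]
  have hlineCount : ∀ p : P, lineCount L p = q + 1 := fun p => by
    rw [ProjectivePlane.lineCount_eq, hq]
  have hLsn : Ls.ncard = Ls.toFinset.card := Set.ncard_eq_toFinset_card' Ls
  have hPsn : Ps.ncard = Ps.toFinset.card := Set.ncard_eq_toFinset_card' Ps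
  rcases Ps.eq_empty_or_nonempty with hPe | ⟨p₀, hp₀⟩
  · -- all lines are in Ls
    have : Ls = Set.univ := by
      ext l
      rcases h l with hl | ⟨p, hp, _⟩
      · simp [hl]
      · simp [hPe] at hp
    rw [hPe, this]
    simp only [Set.ncard_empty, Set.ncard_univ, Nat.card_eq_fintype_card, hcardL]
    push_cast
    nlinarith
  · -- the main counting argument
    set A : Finset L := univ.filter (fun l => p₀ ∈ l) with hA
    have hAcard : A.card = q + 1 := by
      have : A.card = Fintype.card {l : L // p₀ ∈ l} := by
        rw [Fintype.card_subtype]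
      rw [this, ← Nat.card_eq_fintype_card]
      exact (hlineCount p₀)
    set B : P → Finset L := fun p => univ.filter (fun l => p ∈ l ∧ p₀ ∉ l) with hB
    have hBcard : ∀ p ∈ Ps.toFinset.erase p₀, (B p).card ≤ q := by
      intro p hp
      have hne : p ≠ p₀ := (Finset.mem_erase.mp hp).1
      have hsub : B p ⊆ (univ.filter (fun l => p ∈ l)).erase (HasLines.mkLine (P := P) (L := L) hne) := by
        intro l hl
        simp only [hB, mem_filter, mem_univ, true_and] at hl
        refine Finset.mem_erase.mpr ⟨?_, by simp [hl.1]⟩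
        intro hcontra
        exact hl.2 (hcontra ▸ (HasLines.mkLine_ax hne).2)
      have hmem : HasLines.mkLine (P := P) (L := L) hne ∈ univ.filter (fun l => p ∈ l) := by
        simp [(HasLines.mkLine_ax hne).1]
      have hfc : (univ.filter (fun l : L => p ∈ l)).card = q + 1 := by
        have : (univ.filter (fun l : L => p ∈ l)).card = Fintype.card {l : L // p ∈ l} := by
          rw [Fintype.card_subtype]
        rw [this, ← Nat.card_eq_fintype_card]
        exact hlineCount p
      calc (B p).card ≤ _ := Finset.card_le_card hsub
        _ = (q + 1) - 1 := by rw [Finset.card_erase_of_mem hmem, hfc]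
        _ = q := rfl
    -- every line is in Ls.toFinset ∪ A ∪ biUnion
    have hcover : (univ : Finset L) ⊆ Ls.toFinset ∪ A ∪ (Ps.toFinset.erase p₀).biUnion B := by
      intro l _
      rcases h l with hl | ⟨p, hp, hpl⟩
      · simp only [Finset.mem_union]
        exact Or.inl (Or.inl (Set.mem_toFinset.mpr hl))
      · by_cases hp₀l : p₀ ∈ l
        · simp only [Finset.mem_union]
          exact Or.inl (Or.inr (by simp [hA, hp₀l]))
        · have hne : p ≠ p₀ := fun hc => hp₀l (hc ▸ hpl)
          simp only [Finset.mem_union]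
          refine Or.inr (Finset.mem_biUnion.mpr ⟨p, Finset.mem_erase.mpr ⟨hne,
            Set.mem_toFinset.mpr hp⟩, ?_⟩)
          simp [hB, hpl, hp₀l]
    have hcount : q ^ 2 + q + 1 ≤ Ls.toFinset.card + (q + 1) +
        q * (Ps.toFinset.card - 1) := by
      have h1 : Fintype.card L ≤ (Ls.toFinset ∪ A ∪ (Ps.toFinset.erase p₀).biUnion B).card := by
        rw [← Finset.card_univ]
        exact Finset.card_le_card hcover
      have h2 : (Ls.toFinset ∪ A ∪ (Ps.toFinset.erase p₀).biUnion B).card ≤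
          Ls.toFinset.card + A.card + ((Ps.toFinset.erase p₀).biUnion B).card := by
        calc _ ≤ (Ls.toFinset ∪ A).card + ((Ps.toFinset.erase p₀).biUnion B).card :=
              Finset.card_union_le _ _
          _ ≤ _ := by
              have := Finset.card_union_le Ls.toFinset A
              omega
      have h3 : ((Ps.toFinset.erase p₀).biUnion B).card ≤ q * (Ps.toFinset.erase p₀).card := by
        calc _ ≤ ∑ p ∈ Ps.toFinset.erase p₀, (B p).card := Finset.card_biUnion_le
          _ ≤ ∑ _p ∈ Ps.toFinset.erase p₀, q := Finset.sum_le_sum hBcard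
          _ = _ := by rw [Finset.sum_const, smul_eq_mul, mul_comm]
      have h4 : (Ps.toFinset.erase p₀).card = Ps.toFinset.card - 1 :=
        Finset.card_erase_of_mem (Set.mem_toFinset.mpr hp₀)
      rw [hcardL] at h1
      rw [h4] at h3
      rw [hAcard] at h2
      have := h1.trans h2
      omega
    have hPpos : 1 ≤ Ps.toFinset.card :=
      Finset.card_pos.mpr ⟨p₀, Set.mem_toFinset.mpr hp₀⟩
    rw [hLsn, hPsn]
    have hcount' : (q : ℤ) ^ 2 + q + 1 ≤ (Ls.toFinset.card : ℤ) + (q + 1) +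
        q * ((Ps.toFinset.card : ℤ) - 1) := by
      have := hcount
      zify [hPpos] at this
      linarith
    nlinarith [hcount']

/-- For a dominating set `D = Ps ∪ Ls`: `|D| ≥ q² + q - (q-1)|Ps|`, dually for `Ls`;
in particular `|D| < 3q - 1` forces `|Ps| ≥ q` and `|Ls| ≥ q`. -/
theorem dominating_lower_bounds {P L : Type*} [Membership P L] [ProjectivePlane P L]
    [Fintype P] [Fintype L] {q : ℕ} (hq : ProjectivePlane.order P L = q)
    (Ps : Set P) (Ls : Set L) (hdom : IsDominating Ps Ls) :
    (q : ℤ) ^ 2 + q - (q - 1) * Ps.ncard ≤ (Ps.ncard : ℤ) + Ls.ncard ∧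
    (q : ℤ) ^ 2 + q - (q - 1) * Ls.ncard ≤ (Ps.ncard : ℤ) + Ls.ncard ∧
    ((Ps.ncard : ℤ) + Ls.ncard < 3 * q - 1 → q ≤ Ps.ncard ∧ q ≤ Ls.ncard) := by
  have h1 : (q : ℤ) ^ 2 + q - (q - 1) * Ps.ncard ≤ (Ps.ncard : ℤ) + Ls.ncard :=
    dominating_key hq Ps Ls hdom.1
  have hqdual : ProjectivePlane.order (Dual L) (Dual P) = q := by
    rw [ProjectivePlane.Dual.order, hq]
  have h2' : (q : ℤ) ^ 2 + q - (q - 1) * Ls.ncard ≤ (Ls.ncard : ℤ) + Ps.ncard := by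
    exact dominating_key (P := Dual L) (L := Dual P) hqdual (Ls : Set (Dual L))
      (Ps : Set (Dual P)) hdom.2
  have h2 : (q : ℤ) ^ 2 + q - (q - 1) * Ls.ncard ≤ (Ps.ncard : ℤ) + Ls.ncard := by
    linarith
  have hq2 : 2 ≤ q := by
    have := ProjectivePlane.one_lt_order P L
    omega
  refine ⟨h1, h2, fun hlt => ?_⟩
  constructor
  · by_contra hc
    push_neg at hc
    have : (Ps.ncard : ℤ) ≤ (q : ℤ) - 1 := by omega
    nlinarith [h1, hlt, (by exact_mod_cast hq2 : (2 : ℤ) ≤ q)]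
  · by_contra hc
    push_neg at hc
    have : (Ls.ncard : ℤ) ≤ (q : ℤ) - 1 := by omega
    nlinarith [h2, hlt, (by exact_mod_cast hq2 : (2 : ℤ) ≤ q)]
end

section
/- Let D = P ∪ L be a dominating set in the incidence graph of a projective plane of order q, and let c be the maximum number of lines of L through a common point. If |L| + 2 - q ≤ c ≤ q - 1, then |L| ≥ 4q - 2 - |D|. -/
open Configuration

/-- If `c`, the maximal number of concurrent lines of `Ls`, satisfies
`|Ls| + 2 - q ≤ c ≤ q - 1`, then `|Ls| ≥ 4q - 2 - |D|`. -/
theorem big_lemma {P L : Type*} [Membership P L] [ProjectivePlane P L]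
    [Fintype P] [Fintype L] {q : ℕ} (hq : ProjectivePlane.order P L = q)
    (Ps : Set P) (Ls : Set L) (hdom : IsDominating Ps Ls) (c : ℕ)
    (hc : IsGreatest {n : ℕ | ∃ p : P, ({l ∈ Ls | p ∈ l}).ncard = n} c)
    (hlow : (Ls.ncard : ℤ) + 2 - q ≤ c) (hhigh : (c : ℤ) ≤ q - 1) :
    4 * (q : ℤ) - 2 - ((Ps.ncard : ℤ) + Ls.ncard) ≤ (Ls.ncard : ℤ) := by
  classical
  obtain ⟨⟨p, hp⟩, hub⟩ := hc
  set s := Ls.ncard with hs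
  -- Finset versions
  let FL : Finset L := Ls.toFinset
  have hFL : FL.card = s := by
    rw [hs, Set.ncard_eq_toFinset_card']
  let pts : L → Finset P := fun l => ({x | x ∈ l} : Set P).toFinset
  have hpts : ∀ l : L, (pts l).card = q + 1 := by
    intro l
    have h := ProjectivePlane.pointCount_eq P l
    rw [hq] at h
    rw [show pts l = ({x | x ∈ l} : Set P).toFinset from rfl, ← Set.ncard_eq_toFinset_card']
    exact h
  have hmempts : ∀ (x : P) (l : L), x ∈ pts l ↔ x ∈ l := by
    intro x l; simp [pts]
  -- the pencil through p
  let T : Finset L := FL.filter (fun l => p ∈ l)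
  have hT : T.card = c := by
    rw [← hp, Set.ncard_eq_toFinset_card']
    congr 1
    ext l
    simp [T, FL, Set.mem_toFinset]
  have hTsub : T ⊆ FL := Finset.filter_subset _ _
  have hcs : c ≤ s := hT ▸ hFL ▸ Finset.card_le_card hTsub
  have hcq : c ≤ q + 1 := by omega
  -- points covered by the pencil
  let A : Finset P := T.biUnion pts
  have hA : A.card ≤ c * q + 1 := by
    have hsub : A ⊆ insert p (T.biUnion (fun t => (pts t).erase p)) := by
      intro x hx
      obtain ⟨t, ht, hxt⟩ := Finset.mem_biUnion.mp hx
      rcases eq_or_ne x p with rfl | hxp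
      · exact Finset.mem_insert_self _ _
      · exact Finset.mem_insert_of_mem (Finset.mem_biUnion.mpr
          ⟨t, ht, Finset.mem_erase.mpr ⟨hxp, hxt⟩⟩)
    calc A.card ≤ (insert p (T.biUnion (fun t => (pts t).erase p))).card :=
          Finset.card_le_card hsub
      _ ≤ (T.biUnion (fun t => (pts t).erase p)).card + 1 :=
          Finset.card_insert_le _ _
      _ ≤ (∑ t ∈ T, ((pts t).erase p).card) + 1 := by
          gcongr; exact Finset.card_biUnion_le
      _ ≤ (∑ t ∈ T, q) + 1 := by
          gcongr with t ht
          have hpt : p ∈ pts t := (hmempts p t).mpr (Finset.mem_filter.mp ht).2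
          rw [Finset.card_erase_of_mem hpt, hpts]
          omega
      _ = c * q + 1 := by rw [Finset.sum_const, hT, smul_eq_mul]
  -- every line of Ls not through p meets A in at least c points
  have hint : ∀ l ∈ FL, p ∉ l → c ≤ (pts l ∩ A).card := by
    intro l hl hpl
    rw [← hT]
    have hmaps : ∀ t ∈ T, (fun t : L => if h : t = l then p else
        HasPoints.mkPoint h) t ∈ pts l ∩ A := by
      intro t ht
      obtain ⟨htF, hpt⟩ := Finset.mem_filter.mp ht
      have htl : t ≠ l := fun h => hpl (h ▸ hpt)
      simp only [dif_neg htl]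
      have hax := HasPoints.mkPoint_ax (P := P) htl
      exact Finset.mem_inter.mpr ⟨(hmempts _ _).mpr hax.2,
        Finset.mem_biUnion.mpr ⟨t, ht, (hmempts _ _).mpr hax.1⟩⟩
    refine Finset.card_le_card_of_injOn _ hmaps ?_
    intro t₁ ht₁ t₂ ht₂ heq
    obtain ⟨ht₁F, hpt₁⟩ := Finset.mem_filter.mp (Finset.mem_coe.mp ht₁)
    obtain ⟨ht₂F, hpt₂⟩ := Finset.mem_filter.mp (Finset.mem_coe.mp ht₂)
    have htl₁ : t₁ ≠ l := fun h => hpl (h ▸ hpt₁)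
    have htl₂ : t₂ ≠ l := fun h => hpl (h ▸ hpt₂)
    simp only [dif_neg htl₁, dif_neg htl₂] at heq
    by_contra hne
    have hax₁ := HasPoints.mkPoint_ax (P := P) htl₁
    have hax₂ := HasPoints.mkPoint_ax (P := P) htl₂
    have := Nondegenerate.eq_or_eq (P := P) (L := L) hax₁.1 hpt₁
      (heq ▸ hax₂.1) hpt₂
    rcases this with h | h
    · exact hpl (h ▸ hax₁.2)
    · exact hne h
  -- covered points
  let Cov : Finset P := FL.biUnion pts
  have hCovsub : Cov ⊆ A ∪ (FL \ T).biUnion (fun l => pts l \ A) := by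
    intro x hx
    obtain ⟨l, hl, hxl⟩ := Finset.mem_biUnion.mp hx
    by_cases hlT : l ∈ T
    · exact Finset.mem_union_left _ (Finset.mem_biUnion.mpr ⟨l, hlT, hxl⟩)
    · by_cases hxA : x ∈ A
      · exact Finset.mem_union_left _ hxA
      · exact Finset.mem_union_right _ (Finset.mem_biUnion.mpr
          ⟨l, Finset.mem_sdiff.mpr ⟨hl, hlT⟩, Finset.mem_sdiff.mpr ⟨hxl, hxA⟩⟩)
  have hCov : Cov.card ≤ (c * q + 1) + (s - c) * (q + 1 - c) := by
    calc Cov.card ≤ (A ∪ (FL \ T).biUnion (fun l => pts l \ A)).card :=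
          Finset.card_le_card hCovsub
      _ ≤ A.card + ((FL \ T).biUnion (fun l => pts l \ A)).card :=
          Finset.card_union_le _ _
      _ ≤ A.card + ∑ l ∈ FL \ T, (pts l \ A).card := by
          gcongr; exact Finset.card_biUnion_le
      _ ≤ (c * q + 1) + ∑ l ∈ FL \ T, (q + 1 - c) := by
          refine Nat.add_le_add hA (Finset.sum_le_sum ?_)
          intro l hl
          · obtain ⟨hlF, hlT⟩ := Finset.mem_sdiff.mp hl
            have hpl : p ∉ l := fun hplmem => hlT (Finset.mem_filter.mpr ⟨hlF, hplmem⟩)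
            have h1 := hint l hlF hpl
            have h2 := Finset.card_inter_add_card_sdiff (pts l) A
            rw [hpts l] at h2
            omega
      _ ≤ (c * q + 1) + (s - c) * (q + 1 - c) := by
          rw [Finset.sum_const, smul_eq_mul, Finset.card_sdiff_of_subset hTsub, hT, hFL]
  -- every uncovered point is in Ps
  have hPs : Fintype.card P ≤ Ps.ncard + Cov.card := by
    have hsub : (Finset.univ : Finset P) ⊆ Ps.toFinset ∪ Cov := by
      intro x _
      rcases hdom.2 x with hx | ⟨l, hlL, hxl⟩
      · exact Finset.mem_union_left _ (Set.mem_toFinset.mpr hx)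
      · exact Finset.mem_union_right _ (Finset.mem_biUnion.mpr
          ⟨l, Set.mem_toFinset.mpr hlL, (hmempts x l).mpr hxl⟩)
    calc Fintype.card P = (Finset.univ : Finset P).card := (Finset.card_univ).symm
      _ ≤ (Ps.toFinset ∪ Cov).card := Finset.card_le_card hsub
      _ ≤ Ps.toFinset.card + Cov.card := Finset.card_union_le _ _
      _ = Ps.ncard + Cov.card := by rw [Set.ncard_eq_toFinset_card']
  have hcardP : Fintype.card P = q ^ 2 + q + 1 := by
    rw [ProjectivePlane.card_points P L, hq]
  -- now pass to the integers
  have hcq' : (c : ℤ) ≤ q + 1 := by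
    have : (c : ℤ) ≤ (q : ℤ) - 1 := hhigh
    linarith
  have hCovZ : (Cov.card : ℤ) ≤ ((c : ℤ) * q + 1) + ((s : ℤ) - c) * ((q : ℤ) + 1 - c) := by
    have := hCov
    have h1 : ((s - c : ℕ) : ℤ) = (s : ℤ) - c := by
      rw [Nat.cast_sub hcs]
    have h2 : ((q + 1 - c : ℕ) : ℤ) = (q : ℤ) + 1 - c := by
      rw [Nat.cast_sub hcq]
      push_cast
      ring
    calc (Cov.card : ℤ) ≤ (((c * q + 1) + (s - c) * (q + 1 - c) : ℕ) : ℤ) := by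
          exact_mod_cast hCov
      _ = ((c : ℤ) * q + 1) + ((s : ℤ) - c) * ((q : ℤ) + 1 - c) := by
          push_cast [h1, h2]; ring
  have hPsZ : ((q : ℤ) ^ 2 + q + 1) ≤ (Ps.ncard : ℤ) + Cov.card := by
    have := hPs
    rw [hcardP] at this
    exact_mod_cast this
  have hprod : (0 : ℤ) ≤ ((c : ℤ) - ((s : ℤ) + 2 - q)) * (((q : ℤ) - 1) - c) :=
    mul_nonneg (by linarith) (by linarith)
  nlinarith [hPsZ, hCovZ, hprod]
end

section
/- Let B be a set of points in a projective plane of order q such that every line meets B in at most k points. Let s be the number of lines disjoint from B. Then |B|^2 - (k(q+1)+1)|B| + k(q^2+q+1-s) ≤ 0. -/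
open Configuration

/-- If every line meets `B` in at most `k` points and `s` lines are disjoint from `B`,
then `|B|² - (k(q+1)+1)|B| + k(q²+q+1-s) ≤ 0`. -/
theorem standard_inequality {P L : Type*} [Membership P L] [ProjectivePlane P L]
    [Fintype P] [Fintype L] {q k : ℕ} (hq : ProjectivePlane.order P L = q)
    (B : Set P) (hk : ∀ l : L, ({p ∈ B | p ∈ l}).ncard ≤ k)
    (s : ℕ) (hs : {l : L | ∀ p ∈ B, p ∉ l}.ncard = s) :
    (B.ncard : ℤ) ^ 2 - ((k : ℤ) * (q + 1) + 1) * B.ncard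
      + k * ((q : ℤ) ^ 2 + q + 1 - s) ≤ 0 := by
  classical
  set Bf : Finset P := B.toFinset with hBf
  have hBcard : B.ncard = Bf.card := by
    rw [hBf, ← Set.ncard_coe_finset, Set.coe_toFinset]
  set f : L → ℕ := fun l => (Bf.filter (· ∈ l)).card with hf
  have hfk : ∀ l : L, f l ≤ k := by
    intro l
    have hset : ({p ∈ B | p ∈ l}) = ↑(Bf.filter (· ∈ l)) := by
      ext p; simp [hBf]
    have := hk l
    rwa [hset, Set.ncard_coe_finset] at this
  -- first count: sum of f = |B| * (q+1)
  have h1 : ∑ l : L, f l = Bf.card * (q + 1) := by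
    have hcomm : ∑ l : L, f l
        = ∑ p ∈ Bf, (Finset.univ.filter (fun l : L => p ∈ l)).card := by
      simp_rw [hf, Finset.card_filter]
      exact Finset.sum_comm' (by intro x y; simp [and_comm])
    rw [hcomm]
    have hl : ∀ p : P, (Finset.univ.filter (fun l : L => p ∈ l)).card = q + 1 := by
      intro p
      have := ProjectivePlane.lineCount_eq L p
      rw [hq] at this
      rwa [lineCount, Nat.card_eq_fintype_card, Fintype.card_subtype] at this
    simp [hl, Finset.sum_const, mul_comm]
  -- second count: sum of offDiag cards = offDiag of Bf
  have h2 : ∑ l : L, ((Bf.filter (· ∈ l)).offDiag).card = Bf.offDiag.card := by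
    have key : ∀ l : L, (Bf.filter (· ∈ l)).offDiag
        = Bf.offDiag.filter (fun x => x.1 ∈ l ∧ x.2 ∈ l) := by
      intro l
      ext ⟨a, b⟩
      simp only [Finset.mem_offDiag, Finset.mem_filter]
      tauto
    simp_rw [key, Finset.card_filter]
    rw [Finset.sum_comm]
    have huniq : ∀ x ∈ Bf.offDiag,
        (∑ l : L, if x.1 ∈ l ∧ x.2 ∈ l then 1 else 0) = 1 := by
      rintro ⟨a, b⟩ hx
      have hab : a ≠ b := (Finset.mem_offDiag.mp hx).2.2
      obtain ⟨l₀, hl₀, hl₀u⟩ := HasLines.existsUnique_line P L a b hab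
      rw [Finset.sum_eq_single l₀]
      · simp [hl₀]
      · intro l _ hne
        simp only [ite_eq_right_iff]
        intro h; exact absurd (hl₀u l h) hne
      · simp
    rw [Finset.sum_congr rfl huniq, Finset.sum_const, smul_eq_mul, mul_one]
  -- the number of empty lines
  have h3 : (Finset.univ.filter (fun l : L => f l = 0)).card = s := by
    rw [← hs]
    have hset : {l : L | ∀ p ∈ B, p ∉ l}
        = ↑(Finset.univ.filter (fun l : L => f l = 0)) := by
      ext l
      simp only [Set.mem_setOf_eq, Finset.coe_filter, Finset.mem_univ, true_and,
        Set.mem_setOf_eq, hf, Finset.card_eq_zero, Finset.filter_eq_empty_iff]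
      constructor
      · intro h p hp; exact h p (by simpa [hBf] using hp)
      · intro h p hp; exact h (by simpa [hBf] using hp)
    rw [hset, Set.ncard_coe_finset]
  have hcardL : Fintype.card L = q ^ 2 + q + 1 := by
    rw [ProjectivePlane.card_lines P L, hq]
  -- pointwise bound over ℤ
  have hpt : ∀ l : L, ((f l : ℤ) - 1) * ((f l : ℤ) - k)
      ≤ if f l = 0 then (k : ℤ) else 0 := by
    intro l
    by_cases h0 : f l = 0
    · simp [h0]
    · have h1' : (1 : ℤ) ≤ f l := by exact_mod_cast Nat.one_le_iff_ne_zero.mpr h0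
      have h2' : (f l : ℤ) ≤ k := by exact_mod_cast hfk l
      simp only [h0, if_false]
      nlinarith
  have hsum : ∑ l : L, ((f l : ℤ) - 1) * ((f l : ℤ) - k) ≤ (k : ℤ) * s := by
    calc ∑ l : L, ((f l : ℤ) - 1) * ((f l : ℤ) - k)
        ≤ ∑ l : L, (if f l = 0 then (k : ℤ) else 0) :=
          Finset.sum_le_sum fun l _ => hpt l
      _ = ∑ l ∈ Finset.univ.filter (fun l : L => f l = 0), (k : ℤ) :=
          (Finset.sum_filter _ _).symm
      _ = (k : ℤ) * s := by
          rw [Finset.sum_const, h3, nsmul_eq_mul]; ring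
  -- expand the sum over ℤ
  have hsq : ∑ l : L, ((f l : ℤ)) ^ 2
      = (Bf.offDiag.card : ℤ) + ∑ l : L, (f l : ℤ) := by
    have key : ∀ l : L, ((f l : ℤ)) ^ 2
        = (((Bf.filter (· ∈ l)).offDiag).card : ℤ) + f l := by
      intro l
      have hod := Finset.offDiag_card (Bf.filter (· ∈ l))
      have hle : f l ≤ f l * f l := by
        rcases Nat.eq_zero_or_pos (f l) with h | h
        · simp [h]
        · exact Nat.le_mul_of_pos_left _ h
      have hcast : (((Bf.filter (· ∈ l)).offDiag).card : ℤ)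
          = (f l : ℤ) * f l - f l := by
        rw [hod, Nat.cast_sub hle]; push_cast; rfl
      rw [hcast]; ring
    rw [Finset.sum_congr rfl fun l _ => key l, Finset.sum_add_distrib]
    congr 1
    rw [← Nat.cast_sum, h2]
  have hS : ∑ l : L, (f l : ℤ) = (Bf.card : ℤ) * (q + 1) := by
    rw [← Nat.cast_sum, h1]; push_cast; ring
  have hD : (Bf.offDiag.card : ℤ) = (Bf.card : ℤ) * Bf.card - Bf.card := by
    have hle : Bf.card ≤ Bf.card * Bf.card := by
      rcases Nat.eq_zero_or_pos Bf.card with h | h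
      · simp [h]
      · exact Nat.le_mul_of_pos_left _ h
    rw [Finset.offDiag_card, Nat.cast_sub hle]; push_cast; ring
  have hexp : ∑ l : L, ((f l : ℤ) - 1) * ((f l : ℤ) - k)
      = (∑ l : L, ((f l : ℤ)) ^ 2) - ((k : ℤ) + 1) * (∑ l : L, (f l : ℤ))
        + (k : ℤ) * Fintype.card L := by
    have key : ∀ l : L, ((f l : ℤ) - 1) * ((f l : ℤ) - k)
        = ((f l : ℤ)) ^ 2 - ((k : ℤ) + 1) * f l + k := by
      intro l; ring
    rw [Finset.sum_congr rfl fun l _ => key l, Finset.sum_add_distrib,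
      Finset.sum_sub_distrib, ← Finset.mul_sum, Finset.sum_const,
      Finset.card_univ, nsmul_eq_mul]
    ring
  rw [hexp, hsq, hS, hD, hcardL] at hsum
  rw [hBcard]
  push_cast at hsum ⊢
  nlinarith [hsum]
end

section
/- Let B be a blocking set in a projective plane of order q. If B is nontrivial (contains no full line), then |B| ≥ q + √q + 1. -/
open Configuration Finset

/-- Bruen's theorem: a nontrivial blocking set in a projective plane of order `q`
has at least `q + √q + 1` points. -/
theorem bruen {P L : Type*} [Membership P L] [ProjectivePlane P L]
    [Fintype P] [Fintype L] {q : ℕ} (hq : ProjectivePlane.order P L = q)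
    (B : Set P) (hblock : ∀ l : L, ∃ p ∈ B, p ∈ l)
    (hnontrivial : ¬ ∃ l : L, ∀ p : P, p ∈ l → p ∈ B) :
    (q : ℝ) + Real.sqrt q + 1 ≤ B.ncard := by
  classical
  push_neg at hnontrivial
  have hq1 : 1 < q := hq ▸ ProjectivePlane.one_lt_order P L
  -- Finset version of B
  have hBfin : B.Finite := Set.toFinite B
  set Bf : Finset P := hBfin.toFinset with hBf
  have hmem : ∀ p : P, p ∈ Bf ↔ p ∈ B := fun p => hBfin.mem_toFinset
  set m : ℕ := Bf.card with hm
  have hncard : B.ncard = m := Set.ncard_eq_toFinset_card B hBfin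
  set n : L → ℕ := fun l => (Bf.filter (fun p => p ∈ l)).card with hn
  -- number of lines through a point
  have hlc : ∀ p : P, (univ.filter (fun l : L => p ∈ l)).card = q + 1 := by
    intro p
    rw [← hq, ← ProjectivePlane.lineCount_eq L p, lineCount, Nat.card_eq_fintype_card,
      Fintype.card_subtype]
  -- unique line through two distinct points
  have huniq : ∀ p p' : P, p ≠ p' → (univ.filter (fun l : L => p ∈ l ∧ p' ∈ l)).card = 1 := by
    intro p p' hne
    obtain ⟨l₀, hl₀, hl₀u⟩ := HasLines.existsUnique_line P L p p' hne
    rw [Finset.card_eq_one]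
    refine ⟨l₀, ?_⟩
    ext l
    simp only [mem_filter, mem_univ, true_and, mem_singleton]
    constructor
    · exact fun h => hl₀u l h
    · rintro rfl; exact hl₀
  -- Step A : ∑ n l = m * (q+1)
  have hS1 : ∑ l : L, n l = m * (q + 1) := by
    have : ∑ l : L, n l = ∑ p ∈ Bf, (univ.filter (fun l : L => p ∈ l)).card := by
      simp only [hn, Finset.card_filter]
      rw [Finset.sum_comm]
    rw [this]
    rw [Finset.sum_congr rfl (fun p _ => hlc p), Finset.sum_const, smul_eq_mul]
  -- Step B : ∑ (n l)^2 = m * (q + m)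
  have hS2 : ∑ l : L, (n l) ^ 2 = m * (q + m) := by
    have h1 : ∀ l : L, (n l) ^ 2 =
        ((Bf ×ˢ Bf).filter (fun pp : P × P => pp.1 ∈ l ∧ pp.2 ∈ l)).card := by
      intro l
      rw [Finset.filter_product, Finset.card_product]
      ring
    have h2 : ∑ l : L, (n l) ^ 2 = ∑ pp ∈ Bf ×ˢ Bf,
        (univ.filter (fun l : L => pp.1 ∈ l ∧ pp.2 ∈ l)).card := by
      simp only [h1, Finset.card_filter]
      rw [Finset.sum_comm]
    rw [h2, Finset.sum_product]
    have h3 : ∀ p ∈ Bf, ∑ p' ∈ Bf,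
        (univ.filter (fun l : L => p ∈ l ∧ p' ∈ l)).card = q + m := by
      intro p hp
      rw [← Finset.add_sum_erase _ _ hp]
      have hd : (univ.filter (fun l : L => p ∈ l ∧ p ∈ l)).card = q + 1 := by
        simp only [and_self]; exact hlc p
      have he : ∑ p' ∈ Bf.erase p,
          (univ.filter (fun l : L => p ∈ l ∧ p' ∈ l)).card = m - 1 := by
        rw [Finset.sum_congr rfl (fun p' hp' => huniq p p' (Ne.symm (Finset.ne_of_mem_erase hp'))),
          Finset.sum_const, smul_eq_mul, mul_one, Finset.card_erase_of_mem hp]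
      rw [hd, he]
      have hmpos : 1 ≤ m := Finset.card_pos.mpr ⟨p, hp⟩
      omega
    rw [Finset.sum_congr rfl h3, Finset.sum_const, smul_eq_mul]
  -- Step C : every line is blocked
  have hC : ∀ l : L, 1 ≤ n l := by
    intro l
    obtain ⟨p, hpB, hpl⟩ := hblock l
    exact Finset.card_pos.mpr ⟨p, Finset.mem_filter.mpr ⟨(hmem p).mpr hpB, hpl⟩⟩
  -- Step D : n l + q ≤ m
  have hD : ∀ l : L, n l + q ≤ m := by
    intro l
    obtain ⟨x, hxl, hxB⟩ := hnontrivial l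
    -- choice of a blocking point on each line
    have hch : ∀ l' : L, ∃ p, p ∈ B ∧ p ∈ l' := by
      intro l'; obtain ⟨p, h1, h2⟩ := hblock l'; exact ⟨p, h1, h2⟩
    set f : L → P := fun l' => (hch l').choose with hf
    have hfB : ∀ l', f l' ∈ B := fun l' => (hch l').choose_spec.1
    have hfl : ∀ l', f l' ∈ l' := fun l' => (hch l').choose_spec.2
    set s : Finset L := (univ.filter (fun l' : L => x ∈ l')).erase l with hs
    have hscard : s.card = q := by
      rw [hs, Finset.card_erase_of_mem (Finset.mem_filter.mpr ⟨Finset.mem_univ l, hxl⟩), hlc x]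
      omega
    have hmaps : ∀ l' ∈ s, f l' ∈ Bf.filter (fun p => ¬ p ∈ l) := by
      intro l' hl'
      obtain ⟨hne, hxl'⟩ : l' ≠ l ∧ x ∈ l' := by
        rw [hs] at hl'
        exact ⟨Finset.ne_of_mem_erase hl', (Finset.mem_filter.mp (Finset.mem_of_mem_erase hl')).2⟩
      refine Finset.mem_filter.mpr ⟨(hmem _).mpr (hfB l'), fun hfll => ?_⟩
      rcases Nondegenerate.eq_or_eq (hfl l') hxl' hfll hxl with h | h
      · exact hxB (h ▸ hfB l')
      · exact hne h
    have hinj : ∀ l₁ ∈ s, ∀ l₂ ∈ s, f l₁ = f l₂ → l₁ = l₂ := by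
      intro l₁ hl₁ l₂ hl₂ hfe
      have hxl₁ : x ∈ l₁ := (Finset.mem_filter.mp (Finset.mem_of_mem_erase hl₁)).2
      have hxl₂ : x ∈ l₂ := (Finset.mem_filter.mp (Finset.mem_of_mem_erase hl₂)).2
      rcases Nondegenerate.eq_or_eq (hfl l₁) hxl₁ (hfe ▸ hfl l₂) hxl₂ with h | h
      · exact absurd (h ▸ hfB l₁) hxB
      · exact h
    have hq_le : q ≤ (Bf.filter (fun p => ¬ p ∈ l)).card := by
      rw [← hscard]
      exact Finset.card_le_card_of_injOn f hmaps hinj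
    have hsplit : n l + (Bf.filter (fun p => ¬ p ∈ l)).card = m :=
      Finset.card_filter_add_card_filter_not (fun p => p ∈ l)
    omega
  -- m = q + k with k ≥ 1
  obtain ⟨l₀⟩ : Nonempty L := by
    obtain ⟨p₁, p₂, p₃, l₁, -⟩ := ProjectivePlane.exists_config (P := P) (L := L)
    exact ⟨l₁⟩
  have hmq : q + 1 ≤ m := by have := hD l₀; have := hC l₀; omega
  set k : ℕ := m - q with hk
  have hmk : m = q + k := by omega
  have hk1 : 1 ≤ k := by omega
  -- the key inequality over ℤ
  have hnk : ∀ l : L, n l ≤ k := fun l => by have := hD l; omega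
  have hkey : (0 : ℤ) ≤ ∑ l : L, ((n l : ℤ) - 1) * ((k : ℤ) - (n l : ℤ)) := by
    apply Finset.sum_nonneg
    intro l _
    have h1 := hC l
    have h2 := hnk l
    have h1' : (1 : ℤ) ≤ (n l : ℤ) := by exact_mod_cast h1
    have h2' : (n l : ℤ) ≤ (k : ℤ) := by exact_mod_cast h2
    nlinarith
  have hNL : (Fintype.card L : ℤ) = (q : ℤ) ^ 2 + q + 1 := by
    have := ProjectivePlane.card_lines P L
    rw [hq] at this
    exact_mod_cast this
  have hexp : ∑ l : L, ((n l : ℤ) - 1) * ((k : ℤ) - (n l : ℤ)) =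
      ((k : ℤ) + 1) * (m * (q + 1)) - (m * (q + m)) - (k : ℤ) * ((q : ℤ) ^ 2 + q + 1) := by
    have e1 : ∀ l : L, ((n l : ℤ) - 1) * ((k : ℤ) - (n l : ℤ)) =
        ((k : ℤ) + 1) * (n l : ℤ) - ((n l : ℤ)) ^ 2 - (k : ℤ) := by intro l; ring
    rw [Finset.sum_congr rfl (fun l _ => e1 l), Finset.sum_sub_distrib, Finset.sum_sub_distrib,
      ← Finset.mul_sum, Finset.sum_const, nsmul_eq_mul, Finset.card_univ]
    have c1 : ∑ l : L, (n l : ℤ) = (m : ℤ) * (q + 1) := by exact_mod_cast congrArg Nat.cast hS1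
    have c2 : ∑ l : L, ((n l : ℤ)) ^ 2 = (m : ℤ) * (q + m) := by exact_mod_cast congrArg Nat.cast hS2
    rw [c1, c2, hNL]
    ring
  -- derive q ≤ (k-1)^2
  have hquad : (q : ℤ) ≤ ((k : ℤ) - 1) ^ 2 := by
    rw [hexp] at hkey
    have hmz : (m : ℤ) = (q : ℤ) + (k : ℤ) := by exact_mod_cast hmk
    rw [hmz] at hkey
    have hqpos : (0 : ℤ) < (q : ℤ) := by exact_mod_cast Nat.lt_of_lt_of_le Nat.zero_lt_one hq1.le
    nlinarith
  -- conclude over ℝ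
  rw [hncard]
  have hsq : Real.sqrt q ≤ (k : ℝ) - 1 := by
    have h1 : (q : ℝ) ≤ ((k : ℝ) - 1) ^ 2 := by exact_mod_cast hquad
    have h2 : (0 : ℝ) ≤ (k : ℝ) - 1 := by
      have : (1 : ℝ) ≤ (k : ℝ) := by exact_mod_cast hk1
      linarith
    calc Real.sqrt q ≤ Real.sqrt (((k : ℝ) - 1) ^ 2) := Real.sqrt_le_sqrt h1
      _ = (k : ℝ) - 1 := by rw [Real.sqrt_sq h2]
  have hmr : (m : ℝ) = (q : ℝ) + (k : ℝ) := by exact_mod_cast hmk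
  rw [hmr]
  linarith
end

section
/- Let D = P ∪ L be a dominating set of size less than 3q−1 in the incidence graph of a projective plane of order q, which is minimal (no proper subset is dominating). If some point Q has exactly q lines of L through it, with ℓ the unique line through Q not in L, then L = [Q] \ {ℓ} and P = [ℓ] \ {Q}; in particular |D| = 2q. -/
open Configuration

/-- A dominating set is minimal if no proper subset is dominating. -/
def IsMinimalDominating {P L : Type*} [Membership P L] (Ps : Set P) (Ls : Set L) : Prop :=
  IsDominating Ps Ls ∧
    ∀ Ps' ⊆ Ps, ∀ Ls' ⊆ Ls, IsDominating Ps' Ls' → Ps' = Ps ∧ Ls' = Ls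

/-- Lemma: if a minimal dominating set of size `< 3q - 1` has a point `Q` with exactly
`q` lines of `Ls` through it, `ℓ` being the unique line through `Q` not in `Ls`,
then `Ls = [Q] \ {ℓ}`, `Ps = [ℓ] \ {Q}`, and `|D| = 2q`. -/
theorem minq1 {P L : Type*} [Membership P L] [ProjectivePlane P L]
    [Fintype P] [Fintype L] {q : ℕ} (hq : ProjectivePlane.order P L = q)
    (Ps : Set P) (Ls : Set L) (hmin : IsMinimalDominating Ps Ls)
    (hsize : (Ps.ncard : ℤ) + Ls.ncard < 3 * q - 1)
    (Q : P) (hQ : ({l ∈ Ls | Q ∈ l}).ncard = q)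
    (ℓ : L) (hℓQ : Q ∈ ℓ) (hℓ : ℓ ∉ Ls) :
    Ls = {l : L | Q ∈ l} \ {ℓ} ∧ Ps = {p : P | p ∈ ℓ} \ {Q} ∧
      Ps.ncard + Ls.ncard = 2 * q := by
  classical
  obtain ⟨⟨hdl, hdp⟩, hminimal⟩ := hmin
  have hq2 : 1 < q := hq ▸ ProjectivePlane.one_lt_order P L
  -- line and point counts
  have hcount : ∀ p : P, ({l : L | p ∈ l}).ncard = q + 1 := fun p => by
    rw [← Nat.card_coe_set_eq]
    exact (ProjectivePlane.lineCount_eq L p).trans (by rw [hq])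
  have hcount' : ∀ l : L, ({p : P | p ∈ l}).ncard = q + 1 := fun l => by
    rw [← Nat.card_coe_set_eq]
    exact (ProjectivePlane.pointCount_eq P l).trans (by rw [hq])
  -- uniqueness of the line through two distinct points
  have huniq : ∀ {p₁ p₂ : P} {l₁ l₂ : L}, p₁ ∈ l₁ → p₂ ∈ l₁ → p₁ ∈ l₂ → p₂ ∈ l₂ →
      p₁ ≠ p₂ → l₁ = l₂ := fun h1 h2 h3 h4 hne =>
    (Nondegenerate.eq_or_eq h1 h2 h3 h4).resolve_left hne
  set A1 : Set L := {l : L | Q ∈ l} \ {ℓ} with hA1def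
  set W : Set P := {p : P | p ∈ ℓ} \ {Q} with hWdef
  have hA1card : A1.ncard = q := by
    rw [hA1def, Set.ncard_diff_singleton_of_mem (show ℓ ∈ {l : L | Q ∈ l} from hℓQ),
      hcount]
    omega
  have hWcard : W.ncard = q := by
    rw [hWdef, Set.ncard_diff_singleton_of_mem (show Q ∈ {p : P | p ∈ ℓ} from hℓQ),
      hcount']
    omega
  -- every line through Q other than ℓ is in Ls
  have hA1sub : A1 ⊆ Ls := by
    have hsub : {l ∈ Ls | Q ∈ l} ⊆ A1 := fun l hl =>
      ⟨hl.2, fun h => hℓ ((Set.mem_singleton_iff.mp h) ▸ hl.1)⟩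
    have heq := Set.eq_of_subset_of_ncard_le hsub (by rw [hA1card, hQ]) (Set.toFinite _)
    rw [← heq]
    exact fun l hl => hl.1
  -- every point of ℓ other than Q is in Ps
  have hWsub : W ⊆ Ps := by
    intro p0 hp0
    by_contra hp0Ps
    obtain ⟨hp0ℓ, hp0Q⟩ := hp0
    rw [Set.mem_singleton_iff] at hp0Q
    -- sets in the counting argument
    set C : Set L := {l ∈ Ls | p0 ∈ l} with hCdef
    set M : Set L := {l : L | p0 ∈ l} \ (Ls ∪ {ℓ}) with hMdef
    set U : Set P := W \ Ps with hUdef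
    have hp0U : p0 ∈ U := ⟨⟨hp0ℓ, hp0Q⟩, hp0Ps⟩
    -- choice of a covering line for points of U \ {p0}
    have hex : ∀ u ∈ U \ {p0}, ∃ l, l ∈ Ls ∧ u ∈ l ∧ Q ∉ l ∧ p0 ∉ l := by
      rintro u ⟨⟨⟨huℓ, huQ⟩, huPs⟩, hup0⟩
      rw [Set.mem_singleton_iff] at huQ hup0
      obtain ⟨l, hlLs, hul⟩ := (hdp u).resolve_left huPs
      refine ⟨l, hlLs, hul, fun hQl => ?_, fun hp0l => ?_⟩
      · exact hℓ ((huniq hul hQl huℓ hℓQ huQ) ▸ hlLs)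
      · exact hℓ ((huniq hul hp0l huℓ hp0ℓ hup0) ▸ hlLs)
    set f : P → L := fun u =>
      if h : ∃ l, l ∈ Ls ∧ u ∈ l ∧ Q ∉ l ∧ p0 ∉ l then h.choose else ℓ with hfdef
    have hfspec : ∀ u ∈ U \ {p0}, f u ∈ Ls ∧ u ∈ f u ∧ Q ∉ f u ∧ p0 ∉ f u := by
      intro u hu
      have h := hex u hu
      simp only [hfdef, dif_pos h]
      exact h.choose_spec
    -- choice of a covering point for lines of M
    have hex' : ∀ l ∈ M, ∃ p, p ∈ Ps ∧ p ∈ l ∧ p ∉ ℓ := by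
      rintro l ⟨hp0l, hl2⟩
      simp only [Set.mem_union, Set.mem_singleton_iff, not_or] at hl2
      obtain ⟨hlLs, hlℓ⟩ := hl2
      obtain ⟨p, hpPs, hpl⟩ := (hdl l).resolve_left hlLs
      refine ⟨p, hpPs, hpl, fun hpℓ => ?_⟩
      have hpp0 : p ≠ p0 := fun h => hp0Ps (h ▸ hpPs)
      exact hlℓ (huniq hpl hp0l hpℓ hp0ℓ hpp0)
    set g : L → P := fun l =>
      if h : ∃ p, p ∈ Ps ∧ p ∈ l ∧ p ∉ ℓ then h.choose else Q with hgdef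
    have hgspec : ∀ l ∈ M, g l ∈ Ps ∧ g l ∈ l ∧ g l ∉ ℓ := by
      intro l hl
      have h := hex' l hl
      simp only [hgdef, dif_pos h]
      exact h.choose_spec
    -- |U \ {p0}| ≤ |Ls \ (A1 ∪ C)|
    have hULs : (U \ {p0}).ncard ≤ (Ls \ (A1 ∪ C)).ncard := by
      apply Set.ncard_le_ncard_of_injOn f _ _ (Set.toFinite _)
      · intro u hu
        obtain ⟨h1, h2, h3, h4⟩ := hfspec u hu
        refine ⟨h1, fun hmem => ?_⟩
        rcases hmem with h | h
        · exact h3 h.1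
        · exact h4 h.2
      · intro u hu v hv hfuv
        by_contra huv
        obtain ⟨h1, h2, h3, h4⟩ := hfspec u hu
        obtain ⟨h1', h2', h3', h4'⟩ := hfspec v hv
        have huℓ : u ∈ ℓ := hu.1.1.1
        have hvℓ : v ∈ ℓ := hv.1.1.1
        exact h3 ((huniq h2 (hfuv ▸ h2') huℓ hvℓ huv) ▸ hℓQ)
    -- |M| ≤ |Ps \ W|
    have hMPs : M.ncard ≤ (Ps \ W).ncard := by
      apply Set.ncard_le_ncard_of_injOn g _ _ (Set.toFinite _)
      · intro l hl
        obtain ⟨h1, h2, h3⟩ := hgspec l hl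
        exact ⟨h1, fun hmem => h3 hmem.1⟩
      · intro l1 hl1 l2 hl2 hgl
        by_contra hll
        obtain ⟨h1, h2, h3⟩ := hgspec l1 hl1
        obtain ⟨h1', h2', h3'⟩ := hgspec l2 hl2
        have hgp0 : g l1 ≠ p0 := fun h => h3 (h ▸ hp0ℓ)
        exact hll (huniq h2 hl1.1 (hgl ▸ h2') hl2.1 hgp0)
    -- partition of Ls
    have hCsub : C ⊆ Ls := fun l hl => hl.1
    have hA1C : Disjoint A1 C := by
      rw [Set.disjoint_left]
      rintro l ⟨hQl, hlℓ⟩ ⟨hlLs, hp0l⟩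
      exact hlℓ (Set.mem_singleton_iff.mpr (huniq hQl hp0l hℓQ hp0ℓ (fun h => hp0Q h.symm)))
    have hLssplit : Ls.ncard = A1.ncard + C.ncard + (Ls \ (A1 ∪ C)).ncard := by
      have hsub : A1 ∪ C ⊆ Ls := Set.union_subset hA1sub hCsub
      have h1 : (Ls ∩ (A1 ∪ C)).ncard + (Ls \ (A1 ∪ C)).ncard = Ls.ncard :=
        Set.ncard_inter_add_ncard_diff_eq_ncard Ls (A1 ∪ C) (Set.toFinite _)
      have h2 : Ls ∩ (A1 ∪ C) = A1 ∪ C := Set.inter_eq_self_of_subset_right hsub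
      have h3 : (A1 ∪ C).ncard = A1.ncard + C.ncard :=
        Set.ncard_union_eq hA1C (Set.toFinite _) (Set.toFinite _)
      rw [h2, h3] at h1
      omega
      
    -- partition of Ps
    have hPssplit : (Ps ∩ W).ncard + (Ps \ W).ncard = Ps.ncard :=
      Set.ncard_inter_add_ncard_diff_eq_ncard Ps W (Set.toFinite _)
    -- partition of W
    have hWsplit : (W ∩ Ps).ncard + U.ncard = q := by
      rw [← hWcard]
      exact Set.ncard_inter_add_ncard_diff_eq_ncard W Ps (Set.toFinite _)
    have hUsplit : (U \ {p0}).ncard + 1 = U.ncard :=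
      Set.ncard_diff_singleton_add_one hp0U (Set.toFinite _)
    -- partition of the pencil of lines through p0
    have hpencil : M.ncard + (C.ncard + 1) = q + 1 := by
      have h1 : ({l : L | p0 ∈ l} ∩ (Ls ∪ {ℓ})).ncard + M.ncard = q + 1 := by
        rw [← hcount p0]
        exact Set.ncard_inter_add_ncard_diff_eq_ncard _ _ (Set.toFinite _)
      have h2 : {l : L | p0 ∈ l} ∩ (Ls ∪ {ℓ}) = C ∪ {ℓ} := by
        ext l
        constructor
        · rintro ⟨hp0l, hl | hl⟩
          · exact Or.inl ⟨hl, hp0l⟩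
          · exact Or.inr hl
        · rintro (⟨hlLs, hp0l⟩ | hl)
          · exact ⟨hp0l, Or.inl hlLs⟩
          · rw [Set.mem_singleton_iff] at hl
            exact ⟨hl ▸ hp0ℓ, Or.inr (hl ▸ rfl)⟩
      have h3 : (C ∪ {ℓ}).ncard = C.ncard + 1 := by
        rw [Set.ncard_union_eq (by rw [Set.disjoint_singleton_right]; exact fun h => hℓ h.1)
          (Set.toFinite _) (Set.toFinite _), Set.ncard_singleton]
      rw [h2, h3] at h1
      omega
    have hWPs : (W ∩ Ps) = (Ps ∩ W) := Set.inter_comm _ _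
    rw [hWPs] at hWsplit
    -- combine
    have : 3 * q ≤ Ps.ncard + Ls.ncard + 1 := by omega
    omega
  -- the reduced dominating set
  have hdom : IsDominating W A1 := by
    constructor
    · intro l
      by_cases hQl : Q ∈ l
      · by_cases hlℓ : l = ℓ
        · obtain ⟨p, hpℓ, hpQ⟩ := Set.exists_ne_of_one_lt_ncard
            (by rw [hcount' ℓ]; omega) Q
          exact Or.inr ⟨p, ⟨hlℓ ▸ hpℓ, hpQ⟩, hlℓ ▸ hpℓ⟩
        · exact Or.inl ⟨hQl, hlℓ⟩
      · right
        have hlℓ : l ≠ ℓ := fun h => hQl (h ▸ hℓQ)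
        obtain ⟨h1, h2⟩ := HasPoints.mkPoint_ax (P := P) (L := L) hlℓ
        exact ⟨HasPoints.mkPoint (P := P) (L := L) hlℓ, ⟨h2, fun h => hQl (h ▸ h1)⟩, h1⟩
    · intro p
      by_cases hpℓ : p ∈ ℓ
      · by_cases hpQ : p = Q
        · obtain ⟨l, hlQ, hlℓ⟩ := Set.exists_ne_of_one_lt_ncard
            (by rw [hcount Q]; omega) ℓ
          exact Or.inr ⟨l, ⟨hlQ, hlℓ⟩, hpQ ▸ hlQ⟩
        · exact Or.inl ⟨hpℓ, hpQ⟩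
      · right
        have hpQ : p ≠ Q := fun h => hpℓ (h ▸ hℓQ)
        obtain ⟨h1, h2⟩ := HasLines.mkLine_ax (P := P) (L := L) hpQ
        refine ⟨HasLines.mkLine (P := P) (L := L) hpQ, ⟨h2, fun h => hpℓ ?_⟩, h1⟩
        rw [Set.mem_singleton_iff] at h
        exact h ▸ h1
  obtain ⟨hPeq, hLeq⟩ := hminimal W hWsub A1 hA1sub hdom
  refine ⟨hLeq.symm, hPeq.symm, ?_⟩
  rw [← hPeq, ← hLeq, hWcard, hA1card]
  ring
end

section
/- Let D = P ∪ L be a minimal dominating set in the incidence graph of a projective plane of order q with all q+1 lines through some point Q contained in L. Then Q ∉ P, and if L contains no further lines beyond [Q], then P ∪ {Q} is a blocking set of the plane. -/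
open Configuration

/-- Lemma: if a minimal dominating set contains the full pencil of lines through `Q`,
then `Q ∉ Ps`, and if `Ls` is exactly that pencil, then `Ps ∪ {Q}` is a blocking set. -/
theorem minq2 {P L : Type*} [Membership P L] [ProjectivePlane P L]
    [Fintype P] [Fintype L] {q : ℕ} (hq : ProjectivePlane.order P L = q)
    (Ps : Set P) (Ls : Set L) (hmin : IsMinimalDominating Ps Ls)
    (Q : P) (hpencil : {l : L | Q ∈ l} ⊆ Ls) :
    Q ∉ Ps ∧
      (Ls ⊆ {l : L | Q ∈ l} → ∀ l : L, ∃ p ∈ insert Q Ps, p ∈ l) := by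
  obtain ⟨⟨hdomL, hdomP⟩, hm⟩ := hmin
  -- there is a line through Q
  have hline : ∃ l : L, Q ∈ l := by
    have h := ProjectivePlane.lineCount_eq L Q
    have hpos : 0 < lineCount L Q := by omega
    rw [lineCount, Nat.card_pos_iff] at hpos
    obtain ⟨⟨l, hl⟩⟩ := hpos.1
    exact ⟨l, hl⟩
  constructor
  · intro hQ
    have hdom' : IsDominating (Ps \ {Q}) Ls := by
      constructor
      · intro l
        rcases hdomL l with h | ⟨p, hp, hpl⟩
        · exact Or.inl h
        by_cases hpq : p = Q
        · subst hpq; exact Or.inl (hpencil hpl)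
        · exact Or.inr ⟨p, ⟨hp, hpq⟩, hpl⟩
      · intro p
        by_cases hpq : p = Q
        · subst hpq
          obtain ⟨l, hl⟩ := hline
          exact Or.inr ⟨l, hpencil hl, hl⟩
        rcases hdomP p with h | h
        · exact Or.inl ⟨h, hpq⟩
        · exact Or.inr h
    have heq := (hm (Ps \ {Q}) Set.diff_subset Ls le_rfl hdom').1
    have hnot : Q ∉ Ps \ {Q} := fun h => h.2 rfl
    rw [heq] at hnot
    exact hnot hQ
  · intro hsub l
    by_cases hQl : Q ∈ l
    · exact ⟨Q, Set.mem_insert _ _, hQl⟩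
    rcases hdomL l with h | ⟨p, hp, hpl⟩
    · exact absurd (hsub h) hQl
    · exact ⟨p, Set.mem_insert_of_mem _ hp, hpl⟩
end

section
/- Let D = P ∪ L be a dominating set in a projective plane of order q with |D| ≤ (5q−3)/2, such that at most q−1 lines of L pass through any common point and every line meets P in at most q−1 points (D is non-primal). Then the maximal secant length k of P satisfies k ≤ |P| − q + 1, and the maximal concurrency c of L satisfies c ≤ |L| − q + 1. -/
open Configuration

/-!
Let `l` be a line with `k` points of `P`, and `s = |P| - k` the number of points of `P` off
`l`; suppose `s ≤ q - 2`. A line through a point `Q ∈ l \ P`, other than `l`, either belongs to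
`L` or meets `P` off `l`, and at most `s` lines through `Q` do the latter; so at least
`q - s ≥ 2` lines of `L` other than `l` pass through each of the `q + 1 - k ≥ 2` points of
`l \ P`. These lines are distinct, hence
`|L| ≥ (q + 1 - k)(q - s) ≥ 2(q + 1 - k) + 2(q - s) - 4`, and with `2(|P| + |L|) ≤ 5q - 3`
this gives `2|P| ≥ 3q - 1`. On the other hand the `q² - s` points off `l` outside `P` are
covered by `L`, each line covering at most `q` of them, so `|L| ≥ q` and `2|P| ≤ 3q - 3`.
The bound on `c` is the dual statement.
-/

open Finset

theorem Finset.ncard_sep_coe {α : Type*} (s : Finset α) (p : α → Prop) [DecidablePred p] :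
    {a ∈ (s : Set α) | p a}.ncard = #{a ∈ s | p a} := by
  rw [← Set.ncard_coe_finset, coe_filter]; rfl

namespace Configuration

open scoped Classical

variable {P L : Type*} [Membership P L]

namespace Nondegenerate

variable [Nondegenerate P L]

theorem card_lines_through_meeting_le [Fintype L] {Q : P} {S : Finset P} (hQ : Q ∉ S) :
    #{m : L | Q ∈ m ∧ ∃ p ∈ S, p ∈ m} ≤ #S :=
  card_le_card_of_forall_subsingleton (fun m p => p ∈ m) (fun _ hm => (mem_filter.1 hm).2.2)
    fun _ hp _ hm₁ _ hm₂ =>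
      ((eq_or_eq hm₁.2 (mem_filter.1 hm₁.1).2.1 hm₂.2 (mem_filter.1 hm₂.1).2.1).resolve_left
        (ne_of_mem_of_not_mem hp hQ))

theorem card_mul_le_card_of_le_card_lines_through {l : L} {W : Finset P}
    (hW : ∀ Q ∈ W, Q ∈ l) (Ls : Finset L) {b : ℕ}
    (hb : ∀ Q ∈ W, b ≤ #{m ∈ Ls | Q ∈ m ∧ m ≠ l}) : #W * b ≤ #Ls := by
  simpa using card_mul_le_card_mul (fun Q m => Q ∈ m ∧ m ≠ l) hb fun m _ =>
    card_le_one.2 fun Q₁ h₁ Q₂ h₂ => by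
      rw [mem_bipartiteBelow] at h₁ h₂
      exact (eq_or_eq h₁.2.1 h₂.2.1 (hW Q₁ h₁.1) (hW Q₂ h₂.1)).resolve_right h₁.2.2

end Nondegenerate

namespace ProjectivePlane

variable [ProjectivePlane P L] [Fintype P] [Fintype L]

variable (P) in
theorem card_points_on_line (l : L) : #{p : P | p ∈ l} = order P L + 1 := by
  rw [← pointCount_eq P l, pointCount, Nat.card_eq_fintype_card, Fintype.card_subtype]

variable (L) in
theorem card_lines_through_point (p : P) : #{l : L | p ∈ l} = order P L + 1 := by
  rw [← lineCount_eq L p, lineCount, Nat.card_eq_fintype_card, Fintype.card_subtype]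

theorem card_points_off_line (l : L) : #{p : P | p ∉ l} = order P L ^ 2 := by
  have := card_filter_add_card_filter_not (s := univ) (fun p : P => p ∈ l)
  rw [card_univ, card_points P L, card_points_on_line] at this
  omega

theorem card_points_on_off_le (l m : L) : #{p : P | p ∈ m ∧ p ∉ l} ≤ order P L := by
  by_cases hml : m = l
  · simp [hml]
  have hx := HasPoints.mkPoint_ax (P := P) hml
  calc #{p : P | p ∈ m ∧ p ∉ l}
      _ ≤ #(({p : P | p ∈ m} : Finset P).erase (HasPoints.mkPoint hml)) :=
        card_le_card fun p hp => by
          simp only [mem_filter, mem_univ, true_and, mem_erase] at hp ⊢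
          exact ⟨(ne_of_mem_of_not_mem hx.2 hp.2).symm, hp.1⟩
      _ = order P L := by rw [card_erase_of_mem (by simp [hx.1]), card_points_on_line]; rfl

variable {Ps : Finset P} {Ls : Finset L}

theorem order_le_card_lines_through_add_card_off_line
    (hdom : ∀ m : L, m ∈ Ls ∨ ∃ p ∈ Ps, p ∈ m) {l : L} {Q : P} (hQl : Q ∈ l)
    (hQ : Q ∉ Ps) :
    order P L ≤ #{m ∈ Ls | Q ∈ m ∧ m ≠ l} + #{p ∈ Ps | p ∉ l} := by
  set S := {p ∈ Ps | p ∉ l}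
  have hcover : ({m : L | Q ∈ m} : Finset L) ⊆
      insert l ({m ∈ Ls | Q ∈ m ∧ m ≠ l} ∪
        ({m : L | Q ∈ m ∧ ∃ p ∈ S, p ∈ m} : Finset L)) := by
    intro m hm
    rw [mem_filter] at hm
    rcases eq_or_ne m l with rfl | hml
    · exact mem_insert_self _ _
    refine mem_insert_of_mem ?_
    rcases hdom m with hmLs | ⟨p, hp, hpm⟩
    · exact mem_union_left _ (mem_filter.2 ⟨hmLs, hm.2, hml⟩)
    · have hpl : p ∉ l := fun hpl =>
        ((Nondegenerate.eq_or_eq hpm hm.2 hpl hQl).resolve_right hml ▸ hQ) hp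
      exact mem_union_right _
        (mem_filter.2 ⟨mem_univ _, hm.2, p, mem_filter.2 ⟨hp, hpl⟩, hpm⟩)
  have hQS : Q ∉ S := fun h => hQ (mem_filter.1 h).1
  have := (card_lines_through_point L Q).symm.trans_le <| (card_le_card hcover).trans <|
    (card_insert_le _ _).trans <| Nat.add_le_add_right (card_union_le _ _) 1
  have := Nondegenerate.card_lines_through_meeting_le (L := L) hQS
  omega

theorem order_le_card_of_covers_off_line {l : L} (hPs : #{p ∈ Ps | p ∉ l} < order P L)
    (hcover : ∀ p : P, p ∈ Ps ∨ ∃ m ∈ Ls, p ∈ m) : order P L ≤ #Ls := by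
  set O : Finset P := {p : P | p ∉ l ∧ p ∉ Ps}
  have hO : #O + #{p ∈ Ps | p ∉ l} = order P L ^ 2 := by
    rw [← card_points_off_line l, ← card_filter_add_card_filter_not (s := {p : P | p ∉ l})
      (· ∉ Ps), filter_filter, filter_filter]
    congr 2; ext; simp [and_comm]
  have hOLs : #O * 1 ≤ #Ls * order P L :=
    card_mul_le_card_mul (fun p m => p ∈ m)
      (fun p hp => card_pos.2 <| by
        obtain ⟨m, hm, hpm⟩ := (hcover p).resolve_left (mem_filter.1 hp).2.2
        exact ⟨m, (mem_bipartiteAbove _).2 ⟨hm, hpm⟩⟩)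
      (fun m _ => (card_le_card fun p hp => by
          rw [mem_bipartiteBelow] at hp
          exact mem_filter.2 ⟨mem_univ p, hp.2, (mem_filter.1 hp.1).2.1⟩).trans
        (card_points_on_off_le l m))
  have : order P L * order P L < (#Ls + 1) * order P L := by nlinarith
  exact Nat.le_of_lt_succ (Nat.lt_of_mul_lt_mul_right this)

theorem card_secant_add_order_le (hdom : IsDominating (Ps : Set P) (Ls : Set L)) (l : L)
    (hl : #{p ∈ Ps | p ∈ l} < order P L) (hsize : 2 * (#Ps + #Ls) + 3 ≤ 5 * order P L) :
    #{p ∈ Ps | p ∈ l} + order P L ≤ #Ps + 1 := by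
  by_contra! hlong
  set q := order P L
  set k := #{p ∈ Ps | p ∈ l}
  set s := #{p ∈ Ps | p ∉ l}
  set W : Finset P := {Q : P | Q ∈ l ∧ Q ∉ Ps}
  have hks : k + s = #Ps := card_filter_add_card_filter_not _
  have hW : #W + k = q + 1 := by
    rw [← card_points_on_line P l,
      ← card_filter_add_card_filter_not (s := {p : P | p ∈ l}) (· ∉ Ps), filter_filter,
      filter_filter]
    congr 1
    simp only [k]
    congr 1; ext; simp [and_comm]
  have hLs_mul : #W * (q - s) ≤ #Ls :=
    Nondegenerate.card_mul_le_card_of_le_card_lines_through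
      (fun Q hQ => (mem_filter.1 hQ).2.1) Ls fun Q hQ =>
        Nat.sub_le_of_le_add <| order_le_card_lines_through_add_card_off_line hdom.1
          (mem_filter.1 hQ).2.1 (mem_filter.1 hQ).2.2
  have hLs_order : q ≤ #Ls := order_le_card_of_covers_off_line (l := l) (by omega) hdom.2
  have hprod : 2 * #W + 2 * (q - s) ≤ #W * (q - s) + 4 := by
    have hW2 : 2 ≤ #W := by omega
    have hb2 : 2 ≤ q - s := by omega
    nlinarith
  omega

theorem card_pencil_add_order_le (hdom : IsDominating (Ps : Set P) (Ls : Set L)) (p : P)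
    (hp : #{m ∈ Ls | p ∈ m} < order P L) (hsize : 2 * (#Ps + #Ls) + 3 ≤ 5 * order P L) :
    #{m ∈ Ls | p ∈ m} + order P L ≤ #Ls + 1 := by
  have := card_secant_add_order_le (P := Dual L) (L := Dual P) ⟨hdom.2, hdom.1⟩ p
    (by rwa [Dual.order]) (by rw [Dual.order]; convert hsize using 3; exact Nat.add_comm _ _)
  rwa [Dual.order] at this

end ProjectivePlane

end Configuration

/-- For a non-primal dominating set of size at most `(5q-3)/2`, the maximal secant
length `k` of `Ps` satisfies `k ≤ |Ps| - q + 1` and the maximal concurrency `c` of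
`Ls` satisfies `c ≤ |Ls| - q + 1`. -/
theorem nagyszelo {P L : Type*} [Membership P L] [ProjectivePlane P L]
    [Fintype P] [Fintype L] {q : ℕ} (hq : ProjectivePlane.order P L = q)
    (Ps : Set P) (Ls : Set L) (hdom : IsDominating Ps Ls)
    (hnpP : ∀ l : L, ({p ∈ Ps | p ∈ l}).ncard ≤ q - 1)
    (hnpL : ∀ p : P, ({l ∈ Ls | p ∈ l}).ncard ≤ q - 1)
    (hsize : 2 * ((Ps.ncard : ℤ) + Ls.ncard) ≤ 5 * q - 3)
    (k : ℕ) (hk : IsGreatest {n : ℕ | ∃ l : L, ({p ∈ Ps | p ∈ l}).ncard = n} k)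
    (c : ℕ) (hc : IsGreatest {n : ℕ | ∃ p : P, ({l ∈ Ls | p ∈ l}).ncard = n} c) :
    (k : ℤ) ≤ (Ps.ncard : ℤ) - q + 1 ∧ (c : ℤ) ≤ (Ls.ncard : ℤ) - q + 1 := by
  classical
  obtain ⟨l, rfl⟩ := hk.1
  obtain ⟨p, rfl⟩ := hc.1
  subst hq
  have horder := ProjectivePlane.one_lt_order P L
  lift Ps to Finset P using Ps.toFinite
  lift Ls to Finset L using Ls.toFinite
  simp only [Finset.ncard_sep_coe, Set.ncard_coe_finset] at hnpP hnpL hsize ⊢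
  have hsecant := ProjectivePlane.card_secant_add_order_le hdom l
    (by have := hnpP l; omega) (by omega)
  have hpencil := ProjectivePlane.card_pencil_add_order_le hdom p
    (by have := hnpL p; omega) (by omega)
  omega
end
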